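/- Let A be a positive normalized linear functional on L, let f ∈ C^n([a,b]), let 3 ≤ m ≤ n−1, and let g ∈ L with f∘g ∈ L. Then LR(f,g,a,b,A) = (A(g)−a)·(f[a,a] − f[a,b]) + Σ_{k=2}^{m-1} (f^{(k)}(a)/k!) · A[(g−a1)^k] + Σ_{k=1}^{n-m} f[a,…,a (m times); b,…,b (k times)] · A[(g−a1)^m (g−b1)^{k−1}] + A(R_m(g)), where R_m(t) = (t−a)^m (t−b)^{n−m} · f[t; a,…,a (m times); b,…,b ((n−m) times)]. -/

import Mathlib

/-!
This is the Newton form of Hermite interpolation at the nodes `a` (multiplicity `m`) and `b`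
(multiplicity `n - m`), taken at `x = g t` and averaged by `A`. Peeling nodes off with the
recurrence for divided differences gives the Taylor–Newton expansion
`f x = ∑_{j<m} f⁽ʲ⁾(a)/j! (x-a)^j + (x-a)^m [a,…,a,x]`, and expanding `[a,…,a,x]` in the same way
at `b` gives the remaining terms. Subtracting the chord through `(a, f a)` and `(b, f b)` yields the
identity pointwise; as `A` is linear with `A 1 = 1`, the terms affine in `g t` average to the same
expressions in `A g`.
-/

/-- Divided difference of `f` at a (sorted) list of points, with repeated points
handled via derivatives (taken within the set `s`). -/
noncomputable def divDiff (s : Set ℝ) (f : ℝ → ℝ) : List ℝ → ℝ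
  | [] => 0
  | [x] => f x
  | x :: y :: l =>
    if x = (y :: l).getLast (List.cons_ne_nil y l) then
      iteratedDerivWithin (l.length + 1) f s x / Nat.factorial (l.length + 1)
    else
      (divDiff s f (y :: l) - divDiff s f (x :: (y :: l).dropLast)) /
        ((y :: l).getLast (List.cons_ne_nil y l) - x)
termination_by l => l.length
decreasing_by
  all_goals simp [List.length_dropLast]

open Finset

section DividedDifference

variable {s : Set ℝ} {f : ℝ → ℝ}

lemma divDiff_singleton (x : ℝ) : divDiff s f [x] = f x := by simp [divDiff]

lemma divDiff_cons_append_singleton {x y : ℝ} (hxy : x ≠ y) (L : List ℝ) :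
    divDiff s f (x :: (L ++ [y])) =
      (divDiff s f (L ++ [y]) - divDiff s f (x :: L)) / (y - x) := by
  cases L with
  | nil => simp [divDiff, hxy]
  | cons z L =>
    have hlast : (z :: (L ++ [y])).getLast (List.cons_ne_nil _ _) = y :=
      List.getLast_append_singleton (z :: L)
    rw [List.cons_append, divDiff.eq_3, hlast, if_neg hxy, ← List.cons_append,
      List.dropLast_concat]

lemma divDiff_replicate (c : ℝ) (q : ℕ) :
    divDiff s f (List.replicate (q + 1) c) = iteratedDerivWithin q f s c / q.factorial := by
  cases q with
  | zero => simp [divDiff]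
  | succ q =>
    have hlast : c = (c :: List.replicate q c).getLast (List.cons_ne_nil _ _) :=
      (List.getLast_replicate (n := q + 1) (by simp)).symm
    rw [List.replicate_succ, List.replicate_succ, divDiff.eq_3, if_pos hlast]
    simp

variable {a b : ℝ}

lemma divDiff_replicate_append_concat (hab : a ≠ b) (p : ℕ) (L : List ℝ) :
    divDiff s f (List.replicate (p + 1) a ++ (L ++ [b])) =
      (divDiff s f (List.replicate p a ++ (L ++ [b])) -
        divDiff s f (List.replicate (p + 1) a ++ L)) / (b - a) := by
  simpa [List.replicate_succ] using
    divDiff_cons_append_singleton (s := s) (f := f) hab (List.replicate p a ++ L)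

lemma sub_mul_divDiff_replicate_append_singleton (a x : ℝ) (p : ℕ) :
    (x - a) * divDiff s f (List.replicate (p + 1) a ++ [x]) =
      divDiff s f (List.replicate p a ++ [x]) - divDiff s f (List.replicate (p + 1) a) := by
  rcases eq_or_ne x a with rfl | hxa
  · rw [sub_self, zero_mul, ← List.replicate_succ', sub_self]
  · simpa [hxa, sub_ne_zero.mpr hxa, mul_div_cancel₀] using
      congrArg ((x - a) * ·) (divDiff_replicate_append_concat (s := s) (f := f) (Ne.symm hxa) p [])

-- `divDiff` only peels off the first and the last node, so the Newton step at `b` has to be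
-- carried through the block of `a`'s by induction on `p`.
lemma divDiff_replicate_append_cons_replicate (hab : a ≠ b) (x : ℝ) (p q : ℕ) :
    divDiff s f (List.replicate p a ++ x :: List.replicate q b) =
      divDiff s f (List.replicate p a ++ List.replicate (q + 1) b) +
        (x - b) * divDiff s f (List.replicate p a ++ x :: List.replicate (q + 1) b) := by
  have hba : b - a ≠ 0 := sub_ne_zero.mpr hab.symm
  induction p generalizing q with
  | zero =>
    simp only [List.replicate_zero, List.nil_append]
    rcases eq_or_ne x b with rfl | hxb
    · rw [sub_self, zero_mul, add_zero, List.replicate_succ]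
    · rw [List.replicate_succ', divDiff_cons_append_singleton hxb, ← List.replicate_succ']
      field_simp [sub_ne_zero.mpr hxb.symm]
      ring
  | succ p ih =>
    have peel (L : List ℝ) := divDiff_replicate_append_concat (s := s) (f := f) hab p L
    induction q with
    | zero =>
      have hx := sub_mul_divDiff_replicate_append_singleton (s := s) (f := f) a x p
      have ih0 := ih 0
      have e1 := peel []
      have e2 := peel [x]
      simp only [List.replicate_zero, List.replicate_one, List.nil_append, List.append_nil,
        List.cons_append, zero_add] at hx ih0 e1 e2 ⊢
      rw [e1, e2, ← mul_div_assoc, ← add_div, eq_div_iff hba]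
      linear_combination hx + ih0
    | succ q ihq =>
      have e1 := peel (List.replicate (q + 1) b)
      have e2 := peel (x :: List.replicate (q + 1) b)
      have e3 := peel (x :: List.replicate q b)
      simp only [List.cons_append, ← List.replicate_succ'] at e1 e2 e3
      rw [eq_div_iff hba] at e1 e2 e3
      apply mul_left_cancel₀ hba
      linear_combination e3 - e1 - (x - b) * e2 + ih (q + 1) - ihq

lemma eq_sum_add_divDiff_replicate_append_singleton (a x : ℝ) (P : ℕ) :
    f x = (∑ j ∈ range P, iteratedDerivWithin j f s a / j.factorial * (x - a) ^ j) +
      (x - a) ^ P * divDiff s f (List.replicate P a ++ [x]) := by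
  induction P with
  | zero => simp [divDiff_singleton]
  | succ P ih =>
    rw [sum_range_succ, ← divDiff_replicate]
    linear_combination ih - (x - a) ^ P * sub_mul_divDiff_replicate_append_singleton a x P

lemma divDiff_replicate_append_singleton_eq_sum (hab : a ≠ b) (x : ℝ) (p K : ℕ) :
    divDiff s f (List.replicate p a ++ [x]) =
      (∑ k ∈ Icc 1 K,
        divDiff s f (List.replicate p a ++ List.replicate k b) * (x - b) ^ (k - 1)) +
      (x - b) ^ K * divDiff s f (List.replicate p a ++ x :: List.replicate K b) := by
  induction K with
  | zero => simp
  | succ K ih =>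
    rw [sum_Icc_succ_top (by omega), Nat.add_sub_cancel]
    linear_combination ih + (x - b) ^ K * divDiff_replicate_append_cons_replicate hab x p K

lemma eq_chord_add_hermite_expansion (hab : a ≠ b) {m : ℕ} (hm : 2 ≤ m) (K : ℕ) (x : ℝ) :
    f x = f a / (b - a) * (b - x) +
        (f b / (b - a) + (divDiff s f [a, a] - divDiff s f [a, b])) * (x - a) +
      (∑ k ∈ Icc 2 (m - 1), iteratedDerivWithin k f s a / k.factorial * (x - a) ^ k) +
      (∑ k ∈ Icc 1 K,
        divDiff s f (List.replicate m a ++ List.replicate k b) *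
          ((x - a) ^ m * (x - b) ^ (k - 1))) +
      (x - a) ^ m * (x - b) ^ K * divDiff s f (List.replicate m a ++ x :: List.replicate K b) := by
  set D := fun j : ℕ => iteratedDerivWithin j f s a / j.factorial * (x - a) ^ j
  have htaylor := eq_sum_add_divDiff_replicate_append_singleton (s := s) (f := f) a x m
  have hsplit : ∑ j ∈ range m, D j = f a + iteratedDerivWithin 1 f s a * (x - a) +
      ∑ k ∈ Icc 2 (m - 1), D k := by
    rw [range_eq_Ico, ← sum_Ico_consecutive D (Nat.zero_le 2) hm, ← range_eq_Ico,
      ← Ico_add_one_right_eq_Icc, Nat.sub_add_cancel (by omega)]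
    simp [D, sum_range_succ]
  have hnewton : (x - a) ^ m * divDiff s f (List.replicate m a ++ [x]) =
      (∑ k ∈ Icc 1 K,
        divDiff s f (List.replicate m a ++ List.replicate k b) *
          ((x - a) ^ m * (x - b) ^ (k - 1))) +
      (x - a) ^ m * (x - b) ^ K * divDiff s f (List.replicate m a ++ x :: List.replicate K b) := by
    rw [divDiff_replicate_append_singleton_eq_sum hab x m K, mul_add, mul_sum, ← mul_assoc]
    exact congrArg₂ _ (sum_congr rfl fun k _ => mul_left_comm _ _ _) rfl
  have hderiv : divDiff s f [a, a] = iteratedDerivWithin 1 f s a := by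
    simpa using divDiff_replicate (s := s) (f := f) a 1
  have hchord : divDiff s f [a, b] = (f b - f a) / (b - a) := by
    simpa [divDiff_singleton] using divDiff_cons_append_singleton (s := s) (f := f) hab []
  have hinv : (b - a) * (b - a)⁻¹ = 1 := mul_inv_cancel₀ (sub_ne_zero.mpr hab.symm)
  rw [hderiv, hchord]
  linear_combination htaylor + hsplit + hnewton - f a * hinv

end DividedDifference

section LinearFunctional

variable {R E : Type*} [CommRing R] (A : (E → R) →ₗ[R] R)

lemma map_fun_add (u v : E → R) : A (fun t => u t + v t) = A u + A v := map_add A u v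

lemma map_fun_mul (c : R) (u : E → R) : A (fun t => c * u t) = c * A u := map_smul A c u

lemma map_fun_sum {ι : Type*} (S : Finset ι) (u : ι → E → R) :
    A (fun t => ∑ k ∈ S, u k t) = ∑ k ∈ S, A (u k) := by
  rw [← map_sum]
  congr 1
  ext t
  simp

variable {A}

lemma map_fun_sub_const (hA1 : A (fun _ => 1) = 1) (u : E → R) (c : R) :
    A (fun t => u t - c) = A u - c := by
  rw [show (fun t => u t - c) = u - c • fun _ => 1 by ext; simp, map_sub, map_smul, hA1,
    smul_eq_mul, mul_one]

lemma map_fun_const_sub (hA1 : A (fun _ => 1) = 1) (c : R) (u : E → R) :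
    A (fun t => c - u t) = c - A u := by
  rw [show (fun t => c - u t) = c • (fun _ => 1) - u by ext; simp, map_sub, map_smul, hA1,
    smul_eq_mul, mul_one]

end LinearFunctional

theorem lemma21_general_m_general {E : Type*}
    (a b : ℝ) (hab : a < b) (n m : ℕ) (hm : 3 ≤ m)
    (f : ℝ → ℝ)
    (A : (E → ℝ) →ₗ[ℝ] ℝ)
    (hA1 : A (fun _ => (1 : ℝ)) = 1)
    (g : E → ℝ) :
    A (fun t => f (g t)) - (b - A g) / (b - a) * f a - (A g - a) / (b - a) * f b =
      (A g - a) * (divDiff (Set.Icc a b) f [a, a] - divDiff (Set.Icc a b) f [a, b]) +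
      (∑ k ∈ Finset.Icc 2 (m - 1),
        iteratedDerivWithin k f (Set.Icc a b) a / Nat.factorial k *
          A (fun t => (g t - a) ^ k)) +
      (∑ k ∈ Finset.Icc 1 (n - m),
        divDiff (Set.Icc a b) f (List.replicate m a ++ List.replicate k b) *
          A (fun t => (g t - a) ^ m * (g t - b) ^ (k - 1))) +
      A (fun t => (g t - a) ^ m * (g t - b) ^ (n - m) *
          divDiff (Set.Icc a b) f
            (List.replicate m a ++ g t :: List.replicate (n - m) b)) := by
  have hexpand : A (fun t => f (g t)) = _ := congrArg A <| funext fun t =>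
    eq_chord_add_hermite_expansion (s := Set.Icc a b) (f := f) (m := m) hab.ne (by omega) (n - m)
      (g t)
  simp only [map_fun_add, map_fun_mul, map_fun_sum, map_fun_sub_const hA1,
    map_fun_const_sub hA1] at hexpand
  rw [hexpand]
  field_simp [sub_ne_zero.mpr hab.ne']
  ring

/-- Identity (2.5) of Lemma 2.1: the `(m, n-m)` Hermite expansion of the
Edmundson–Lah–Ribarič difference `LR(f,g,a,b,A)`, for `3 ≤ m ≤ n-1`. -/
theorem lemma21_general_m {E : Type*} [Nonempty E]
    (a b : ℝ) (hab : a < b) (n m : ℕ) (hm : 3 ≤ m) (hmn : m + 1 ≤ n)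
    (f : ℝ → ℝ) (hf : ContDiffOn ℝ n f (Set.Icc a b))
    (A : (E → ℝ) →ₗ[ℝ] ℝ)
    (hApos : ∀ h : E → ℝ, (∀ t, 0 ≤ h t) → 0 ≤ A h)
    (hA1 : A (fun _ => (1 : ℝ)) = 1)
    (g : E → ℝ) (hg : ∀ t, g t ∈ Set.Icc a b) :
    A (fun t => f (g t)) - (b - A g) / (b - a) * f a - (A g - a) / (b - a) * f b =
      (A g - a) * (divDiff (Set.Icc a b) f [a, a] - divDiff (Set.Icc a b) f [a, b]) +
      (∑ k ∈ Finset.Icc 2 (m - 1),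
        iteratedDerivWithin k f (Set.Icc a b) a / Nat.factorial k *
          A (fun t => (g t - a) ^ k)) +
      (∑ k ∈ Finset.Icc 1 (n - m),
        divDiff (Set.Icc a b) f (List.replicate m a ++ List.replicate k b) *
          A (fun t => (g t - a) ^ m * (g t - b) ^ (k - 1))) +
      A (fun t => (g t - a) ^ m * (g t - b) ^ (n - m) *
          divDiff (Set.Icc a b) f
            (List.replicate m a ++ g t :: List.replicate (n - m) b)) :=
  lemma21_general_m_general a b hab n m hm f A hA1 g
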